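/- Let A, X, B ∈ M_n with [[A, X],[X*, B]] positive semidefinite, and let X* = U|X*| be a polar decomposition with U unitary. Then for every s > 0, the matrix s²A − 2s|X*| + U* B U is positive semidefinite. -/

import Mathlib

/-!
Compressing the positive semidefinite block matrix by the column `[s • 1; -U]` gives
`s²A - s (X U + Uᴴ Xᴴ) + Uᴴ B U`, and the polar decomposition `Xᴴ = U |Xᴴ|` makes both
`X U` and `Uᴴ Xᴴ` equal to `|Xᴴ|`.
-/

open Matrix Set ComplexOrder

variable {m : Type*}

namespace Matrix.PosSemidef
variable {n : Type*} [Fintype n] [DecidableEq n] {𝕜 : Type*} [RCLike 𝕜] {A : Matrix n n 𝕜}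
noncomputable def sqrt (hA : A.PosSemidef) : Matrix n n 𝕜 :=
  hA.1.eigenvectorUnitary.1 * diagonal ((↑) ∘ (√·) ∘ hA.1.eigenvalues) *
    (star hA.1.eigenvectorUnitary : Matrix n n 𝕜)
lemma posSemidef_sqrt (hA : A.PosSemidef) : PosSemidef hA.sqrt := by
  apply PosSemidef.mul_mul_conjTranspose_same
  refine posSemidef_diagonal_iff.mpr fun i ↦ ?_
  rw [Function.comp_apply, RCLike.nonneg_iff]
  constructor
  · simp only [RCLike.ofReal_re]
    exact Real.sqrt_nonneg _
  · simp only [RCLike.ofReal_im]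
end Matrix.PosSemidef

/-- The modulus `|X| = (XᴴX)^{1/2}` of a matrix. -/
noncomputable def matAbs [Fintype m] [DecidableEq m] (X : Matrix m m ℂ) : Matrix m m ℂ :=
  (Matrix.posSemidef_conjTranspose_mul_self X).sqrt

theorem matAbs_posSemidef [Fintype m] [DecidableEq m] (X : Matrix m m ℂ) :
    (matAbs X).PosSemidef :=
  (Matrix.posSemidef_conjTranspose_mul_self X).posSemidef_sqrt

/-- Functional calculus: apply `f : ℝ → ℝ` to a Hermitian matrix via its spectral
decomposition (junk value `0` for non-Hermitian input). -/
noncomputable def matFun [Fintype m] [DecidableEq m] (f : ℝ → ℝ) (X : Matrix m m ℂ) :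
    Matrix m m ℂ :=
  if h : X.IsHermitian then
    (h.eigenvectorUnitary : Matrix m m ℂ) *
      Matrix.diagonal (fun i => (f (h.eigenvalues i) : ℂ)) *
      star (h.eigenvectorUnitary : Matrix m m ℂ)
  else 0

/-- Real part `Re A = (A + Aᴴ)/2`. -/
noncomputable def reM (A : Matrix m m ℂ) : Matrix m m ℂ := (1/2 : ℂ) • (A + Aᴴ)

/-- Imaginary part `Im A = (A - Aᴴ)/(2i)`. -/
noncomputable def imM (A : Matrix m m ℂ) : Matrix m m ℂ := (1/(2*Complex.I)) • (A - Aᴴ)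

/-- Numerical range `W(A) = {x* A x : x*x = 1}`. -/
def numRange [Fintype m] (A : Matrix m m ℂ) : Set ℂ :=
  {z | ∃ x : m → ℂ, star x ⬝ᵥ x = 1 ∧ z = star x ⬝ᵥ A.mulVec x}

/-- The sector `S_α = {z : Re z ≥ 0, |Im z| ≤ (Re z) tan α}`. -/
def sector (α : ℝ) : Set ℂ := {z | 0 ≤ z.re ∧ |z.im| ≤ z.re * Real.tan α}

namespace Matrix

variable {ι κ l R : Type*}

theorem PosSemidef.fromBlocks_compress [Ring R] [PartialOrder R] [StarRing R]
    [Fintype ι] [Fintype κ] [Finite l]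
    {A : Matrix ι ι R} {B : Matrix κ κ R} {X : Matrix ι κ R}
    (h : (fromBlocks A X Xᴴ B).PosSemidef) (S : Matrix ι l R) (T : Matrix κ l R) :
    (Sᴴ * A * S + Sᴴ * X * T + Tᴴ * Xᴴ * S + Tᴴ * B * T).PosSemidef := by
  convert h.conjTranspose_mul_mul_same (fromRows S T) using 1
  rw [conjTranspose_fromRows_eq_fromCols_conjTranspose, fromCols_mul_fromBlocks,
    fromCols_mul_fromRows]
  simp only [Matrix.add_mul]
  abel

section Polar

variable [Fintype ι] [DecidableEq ι] [CommRing R] [StarRing R] {X U P : Matrix ι ι R}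

theorem conjTranspose_mul_eq_of_eq_unitary_mul (hU : U ∈ unitaryGroup ι R)
    (hpolar : Xᴴ = U * P) : Uᴴ * Xᴴ = P := by
  rw [hpolar, ← Matrix.mul_assoc, ← star_eq_conjTranspose, Unitary.star_mul_self_of_mem hU,
    Matrix.one_mul]

theorem mul_eq_of_conjTranspose_eq_unitary_mul (hU : U ∈ unitaryGroup ι R)
    (hP : P.IsHermitian) (hpolar : Xᴴ = U * P) : X * U = P := by
  rw [← hP.eq, ← conjTranspose_mul_eq_of_eq_unitary_mul hU hpolar, conjTranspose_mul,
    conjTranspose_conjTranspose, conjTranspose_conjTranspose]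

end Polar

end Matrix

theorem polar_block_psd {n : ℕ} (A B X U : Matrix (Fin n) (Fin n) ℂ)
    (h : (Matrix.fromBlocks A X Xᴴ B).PosSemidef)
    (hU : U ∈ Matrix.unitaryGroup (Fin n) ℂ) (hpolar : Xᴴ = U * matAbs Xᴴ) :
    ∀ s : ℝ, 0 < s →
      ((s ^ 2) • A - (2 * s) • matAbs Xᴴ + Uᴴ * B * U).PosSemidef := by
  intro s _
  have hUX := conjTranspose_mul_eq_of_eq_unitary_mul hU hpolar
  have hXU := mul_eq_of_conjTranspose_eq_unitary_mul hU (matAbs_posSemidef Xᴴ).isHermitian hpolar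
  convert h.fromBlocks_compress ((s : ℂ) • 1) (-U) using 1
  simp only [conjTranspose_smul, conjTranspose_one, conjTranspose_neg, Matrix.mul_neg,
    Matrix.neg_mul, Matrix.smul_mul, Matrix.mul_smul, Matrix.one_mul, Matrix.mul_one, neg_neg,
    Matrix.mul_assoc, hXU, hUX, Complex.star_def, Complex.conj_ofReal]
  module
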